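/- Let g = s_0 + s_1 z + ... + s_n z^n ∈ ℤ[z] be a primitive polynomial of degree n with s_0·s_n ≠ 0 such that |s_0| = p^k · d for some positive integers k and d and a prime p with p ∤ d. Let Δ be a positive integer with Δ ≤ n such that g has no nonconstant factor of degree less than Δ in ℤ[z], and suppose that every complex zero of g lies in the region |z| > d^{1/Δ}. Then g is a product of at most min_{0 ≤ i ≤ n} { i + v_p(s_i) } irreducible polynomials in ℤ[z]. In particular, if k = 1, or if p ∤ s_1, then g is irreducible in ℤ[z]. -/

import Mathlib

/-!
Write `g = ±q₁ ⋯ q_r` with the `qⱼ` irreducible. Each `qⱼ` is nonconstant because `g` is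
primitive, so `deg qⱼ ≥ Δ`, and its roots are zeros of `g`; hence
`|qⱼ(0)| ≥ ∏ |roots of qⱼ| > d^{deg qⱼ / Δ} ≥ d`. As `qⱼ(0)` divides `s₀ = ±pᵏd`, this forces
`p ∣ qⱼ(0)`. A product of `r` polynomials with constant terms divisible by `p` has its `i`-th
coefficient divisible by `p^{r-i}`, so `r ≤ i + v_p(s_i)` for every `i`. Taking `i = 0` when
`k = 1`, or `i = 1` when `p ∤ s₁`, gives `r ≤ 1`.
-/

/-- `v_p(a)` with values in `ℕ∞`, where `v_p(0) = ∞`. -/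
noncomputable def intVal (p : ℕ) (a : ℤ) : ℕ∞ :=
  if a = 0 then ⊤ else (padicValInt p a : ℕ∞)

open Polynomial UniqueFactorizationMonoid

theorem Multiset.pow_card_lt_prod {R : Type*} [CommSemiring R] [PartialOrder R]
    [IsStrictOrderedRing R] {t : R} (ht : 0 ≤ t) {s : Multiset R} (hs : s ≠ 0)
    (h : ∀ x ∈ s, t < x) : t ^ card s < s.prod := by
  induction s using Multiset.induction with
  | empty => exact absurd rfl hs
  | cons a s ih =>
    have hta : t < a := h a (mem_cons_self a s)
    rcases eq_or_ne s 0 with rfl | hs'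
    · simpa using hta
    rw [prod_cons, card_cons, pow_succ']
    exact mul_lt_mul'' hta (ih hs' fun x hx => h x (mem_cons_of_mem hx)) ht (by positivity)

namespace Polynomial

theorem pow_natDegree_lt_abs_coeff_zero {h : ℤ[X]} (hdeg : 0 < h.natDegree) {t : ℝ}
    (ht : 0 ≤ t) (hroots : ∀ z : ℂ, aeval z h = 0 → t < ‖z‖) :
    t ^ h.natDegree < |(h.coeff 0 : ℝ)| := by
  have hinj : Function.Injective (algebraMap ℤ ℂ) := RingHom.injective_int _
  set H := h.map (algebraMap ℤ ℂ)
  have hsplit : H.Splits := IsAlgClosed.splits H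
  have hcard : (H.roots.map (‖·‖)).card = h.natDegree := by
    rw [Multiset.card_map, ← hsplit.natDegree_eq_card_roots, natDegree_map_eq_of_injective hinj]
  have hlc : 1 ≤ ‖H.leadingCoeff‖ := by
    rw [leadingCoeff_map_of_injective hinj, eq_intCast, Complex.norm_intCast]
    exact_mod_cast Int.one_le_abs (leadingCoeff_ne_zero.2 (ne_zero_of_natDegree_gt hdeg))
  have hnorms : ∀ x ∈ H.roots.map (‖·‖), t < x := by
    simp only [Multiset.mem_map, mem_roots', IsRoot.def, H, eval_map_algebraMap]
    rintro _ ⟨z, ⟨-, hz⟩, rfl⟩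
    exact hroots z hz
  calc t ^ h.natDegree < (H.roots.map (‖·‖)).prod := by
        rw [← hcard]
        exact Multiset.pow_card_lt_prod ht (by rw [← Multiset.card_pos, hcard]; exact hdeg) hnorms
    _ ≤ ‖H.leadingCoeff‖ * (H.roots.map (‖·‖)).prod :=
        le_mul_of_one_le_left (Multiset.prod_nonneg fun _ hx => by
          obtain ⟨z, -, rfl⟩ := Multiset.mem_map.1 hx; positivity) hlc
    _ = ‖H.coeff 0‖ := by
        rw [hsplit.coeff_zero_eq_leadingCoeff_mul_prod_roots, norm_mul, norm_mul, norm_pow,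
          norm_neg, norm_one, one_pow, one_mul]
        exact congrArg _ (map_multiset_prod (normHom : ℂ →*₀ ℝ) _).symm
    _ = |(h.coeff 0 : ℝ)| := by simp [H, coeff_map]

theorem lt_natAbs_coeff_zero_of_roots {h : ℤ[X]} {d Δ : ℕ} (hd : 0 < d) (hΔ0 : 0 < Δ)
    (hΔ : Δ ≤ h.natDegree)
    (hroots : ∀ z : ℂ, aeval z h = 0 → (d : ℝ) ^ ((1 : ℝ) / Δ) < ‖z‖) :
    d < (h.coeff 0).natAbs := by
  set t : ℝ := (d : ℝ) ^ ((1 : ℝ) / Δ)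
  have ht : 1 ≤ t := Real.one_le_rpow (by exact_mod_cast hd) (by positivity)
  have htΔ : t ^ Δ = d := by
    rw [← Real.rpow_natCast, ← Real.rpow_mul (Nat.cast_nonneg d), one_div,
      inv_mul_cancel₀ (by exact_mod_cast hΔ0.ne'), Real.rpow_one]
  have := calc (d : ℝ) = t ^ Δ := htΔ.symm
    _ ≤ t ^ h.natDegree := pow_le_pow_right₀ ht hΔ
    _ < |(h.coeff 0 : ℝ)| :=
      pow_natDegree_lt_abs_coeff_zero (hΔ0.trans_le hΔ) (by positivity) hroots
  rw [← Int.cast_abs, Int.abs_eq_natAbs, Int.cast_natCast] at this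
  exact_mod_cast this

theorem pow_sub_dvd_coeff_mul {R : Type*} [CommSemiring R] {a : R} {m : ℕ} {f g : R[X]}
    (hf : a ∣ f.coeff 0) (hg : ∀ i, a ^ (m - i) ∣ g.coeff i) (i : ℕ) :
    a ^ (m + 1 - i) ∣ (f * g).coeff i := by
  rw [coeff_mul]
  refine Finset.dvd_sum fun ⟨j, l⟩ hjl => ?_
  have hjl : j + l = i := Finset.HasAntidiagonal.mem_antidiagonal.1 hjl
  rcases Nat.eq_zero_or_pos j with rfl | hj
  · refine (pow_dvd_pow a (by omega : m + 1 - i ≤ (m - l) + 1)).trans ?_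
    rw [pow_succ']
    exact mul_dvd_mul hf (hg l)
  · exact ((pow_dvd_pow a (by omega : m + 1 - i ≤ m - l)).trans (hg l)).mul_left _

theorem pow_sub_dvd_coeff_multiset_prod {R : Type*} [CommSemiring R] {a : R}
    {S : Multiset R[X]} (hS : ∀ f ∈ S, a ∣ f.coeff 0) (i : ℕ) :
    a ^ (Multiset.card S - i) ∣ S.prod.coeff i := by
  induction S using Multiset.induction generalizing i with
  | empty => simp
  | cons f S ih =>
    rw [Multiset.prod_cons, Multiset.card_cons]
    exact pow_sub_dvd_coeff_mul (hS f (Multiset.mem_cons_self f S))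
      (ih fun q hq => hS q (Multiset.mem_cons_of_mem hq)) i

theorem IsPrimitive.natDegree_pos_of_irreducible_dvd {R : Type*} [CommSemiring R]
    {g q : R[X]} (hg : g.IsPrimitive) (hq : Irreducible q) (hqg : q ∣ g) : 0 < q.natDegree := by
  by_contra! h
  rw [eq_C_of_natDegree_le_zero h] at hq hqg
  exact hq.not_isUnit (isUnit_C.2 (hg _ hqg))

theorem exists_eq_C_mul_prod_factors {R : Type*} [CommRing R] [IsDomain R]
    [UniqueFactorizationMonoid R] {g : R[X]} (hg : g ≠ 0) :
    ∃ u : Rˣ, g = C (u : R) * (factors g).prod := by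
  obtain ⟨v, hv⟩ := factors_prod hg
  obtain ⟨r, hr, hrv⟩ := isUnit_iff.1 v.isUnit
  exact ⟨hr.unit, by rw [IsUnit.unit_spec, hrv, mul_comm, hv]⟩

end Polynomial

theorem UniqueFactorizationMonoid.irreducible_of_card_factors_le_one {α : Type*}
    [CommMonoidWithZero α] [UniqueFactorizationMonoid α] {a : α} (ha : a ≠ 0)
    (hu : ¬IsUnit a) (h : Multiset.card (factors a) ≤ 1) : Irreducible a := by
  have hne : factors a ≠ 0 := fun h0 => hu ((factors_eq_zero ha).1 h0)
  obtain ⟨q, hq⟩ := Multiset.card_eq_one.1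
    (le_antisymm h (Multiset.card_pos.2 hne))
  have hassoc := factors_prod ha
  rw [hq, Multiset.prod_singleton] at hassoc
  exact hassoc.irreducible (irreducible_of_factor q (hq ▸ Multiset.mem_singleton_self q))

theorem Nat.Prime.dvd_of_dvd_pow_mul_of_lt {p k d m : ℕ} (hp : p.Prime) (hpd : ¬p ∣ d)
    (hm : m ∣ p ^ k * d) (hdm : d < m) : p ∣ m := by
  by_contra hpm
  have hd : d ≠ 0 := fun h => hpd (h ▸ dvd_zero p)
  have := (Nat.Coprime.pow_left k ((hp.coprime_iff_not_dvd).2 hpm)).symm.dvd_of_dvd_mul_left hm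
  exact absurd (Nat.le_of_dvd (Nat.pos_of_ne_zero hd) this) (by omega)

section intVal

variable {p : ℕ}

theorem intVal_eq_zero_of_not_dvd {a : ℤ} (h : ¬(p : ℤ) ∣ a) : intVal p a = 0 := by
  rw [intVal, if_neg (by rintro rfl; exact h (dvd_zero _)), padicValInt.eq_zero_of_not_dvd h]
  rfl

variable [Fact p.Prime]

theorem le_add_intVal_of_pow_sub_dvd {r i : ℕ} {a : ℤ} (h : (p : ℤ) ^ (r - i) ∣ a) :
    (r : ℕ∞) ≤ i + intVal p a := by
  by_cases ha : a = 0
  · simp [intVal, ha]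
  rw [intVal, if_neg ha]
  have := ((padicValInt_dvd_iff _ a).1 h).resolve_left ha
  exact_mod_cast (by omega : r ≤ i + padicValInt p a)

theorem intVal_eq_of_natAbs_eq {a : ℤ} {k d : ℕ} (hpd : ¬p ∣ d) (ha : a.natAbs = p ^ k * d) :
    intVal p a = k := by
  have hd : d ≠ 0 := fun h => hpd (h ▸ dvd_zero p)
  have hp0 : p ^ k ≠ 0 := pow_ne_zero _ (Fact.out : p.Prime).ne_zero
  have ha0 : a ≠ 0 := Int.natAbs_ne_zero.1 (ha ▸ mul_ne_zero hp0 hd)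
  rw [intVal, if_neg ha0, padicValInt, ha, padicValNat.mul hp0 hd, padicValNat.prime_pow,
    padicValNat.eq_zero_of_not_dvd hpd, add_zero]

theorem inf_add_intVal_coeff_le_one {g : ℤ[X]} {n k d : ℕ} (hn : 0 < n) (hpd : ¬p ∣ d)
    (hs0 : (g.coeff 0).natAbs = p ^ k * d) (hcase : k = 1 ∨ ¬(p : ℤ) ∣ g.coeff 1) :
    (Finset.range (n + 1)).inf (fun i => (i : ℕ∞) + intVal p (g.coeff i)) ≤ 1 := by
  rcases hcase with rfl | hp1
  · refine (Finset.inf_le (Finset.mem_range.2 n.succ_pos)).trans ?_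
    simp [intVal_eq_of_natAbs_eq hpd hs0]
  · refine (Finset.inf_le (Finset.mem_range.2 (by omega : 1 < n + 1))).trans ?_
    simp [intVal_eq_zero_of_not_dvd hp1]

end intVal

theorem statement7_general
    (g : Polynomial ℤ) (n : ℕ) (hdeg : g.natDegree = n)
    (hprim : g.IsPrimitive)
    (k d : ℕ) (hd : 0 < d)
    (p : ℕ) (hp : Nat.Prime p) (hpd : ¬ p ∣ d)
    (hs0 : (g.coeff 0).natAbs = p ^ k * d)
    (Δ : ℕ) (hΔ0 : 0 < Δ) (hΔn : Δ ≤ n)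
    (hΔ : ∀ h : Polynomial ℤ, h ∣ g → 0 < h.natDegree → Δ ≤ h.natDegree)
    (hzeros : ∀ z : ℂ, Polynomial.aeval z g = 0 →
      (d : ℝ) ^ ((1 : ℝ) / (Δ : ℝ)) < ‖z‖) :
    (∃ (u : ℤˣ) (gs : Multiset (Polynomial ℤ)),
      (Multiset.card gs : ℕ∞) ≤
        (Finset.range (n + 1)).inf (fun i => (i : ℕ∞) + intVal p (g.coeff i)) ∧
      (∀ h ∈ gs, 0 < h.natDegree ∧ Irreducible h) ∧
      g = Polynomial.C (u : ℤ) * gs.prod) ∧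
    ((k = 1 ∨ ¬ ((p : ℤ) ∣ g.coeff 1)) → Irreducible g) := by
  have : Fact p.Prime := ⟨hp⟩
  have hn : 0 < n := hΔ0.trans_le hΔn
  have hg0 : g ≠ 0 := by rintro rfl; simp at hdeg; omega
  obtain ⟨u, hu⟩ := exists_eq_C_mul_prod_factors hg0
  set gs := factors g
  have hdvd : ∀ q ∈ gs, q ∣ g := fun q hq =>
    (Multiset.dvd_prod hq).trans (Dvd.intro_left _ hu.symm)
  have hpos : ∀ q ∈ gs, 0 < q.natDegree := fun q hq =>
    hprim.natDegree_pos_of_irreducible_dvd (irreducible_of_factor q hq) (hdvd q hq)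
  have hp_dvd : ∀ q ∈ gs, (p : ℤ) ∣ q.coeff 0 := fun q hq => by
    have hqg := hdvd q hq
    have hq0 : (q.coeff 0).natAbs ∣ p ^ k * d := by
      rw [← hs0, ← constantCoeff_apply, ← constantCoeff_apply]
      exact Int.natAbs_dvd_natAbs.2 (map_dvd constantCoeff hqg)
    refine Int.natCast_dvd.2 (hp.dvd_of_dvd_pow_mul_of_lt hpd hq0 ?_)
    exact lt_natAbs_coeff_zero_of_roots hd hΔ0 (hΔ q hqg (hpos q hq))
      fun z hz => hzeros z (aeval_eq_zero_of_dvd_aeval_eq_zero hqg hz)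
  have hcard : (gs.card : ℕ∞) ≤
      (Finset.range (n + 1)).inf (fun i => (i : ℕ∞) + intVal p (g.coeff i)) :=
    Finset.le_inf fun i _ => le_add_intVal_of_pow_sub_dvd <| by
      rw [hu, coeff_C_mul]
      exact (pow_sub_dvd_coeff_multiset_prod hp_dvd i).mul_left _
  refine ⟨⟨u, gs, hcard, fun q hq => ⟨hpos q hq, irreducible_of_factor q hq⟩, hu⟩, fun hcase => ?_⟩
  refine irreducible_of_card_factors_le_one hg0 (not_isUnit_of_natDegree_pos g (hdeg ▸ hn)) ?_
  exact_mod_cast hcard.trans (inf_add_intVal_coeff_le_one hn hpd hs0 hcase)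

/-- Lemma 3: let `g = s_0 + s_1 z + ⋯ + s_n z^n ∈ ℤ[z]` be primitive of degree `n`
with `s_0 s_n ≠ 0` and `|s_0| = p^k d` for positive integers `k, d` and a prime
`p ∤ d`. Let `Δ ≤ n` be a positive integer such that `g` has no nonconstant factor
of degree less than `Δ` in `ℤ[z]`, and suppose every complex zero of `g` lies in the
region `|z| > d^{1/Δ}`. Then `g` is a product of at most
`min_{0 ≤ i ≤ n} {i + v_p(s_i)}` irreducible polynomials in `ℤ[z]` (with
`v_p(0) = ∞`); in particular, if `k = 1` or `p ∤ s_1`, then `g` is irreducible. -/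
theorem statement7
    (g : Polynomial ℤ) (n : ℕ) (hdeg : g.natDegree = n)
    (hs : g.coeff 0 * g.coeff n ≠ 0) (hprim : g.IsPrimitive)
    (k d : ℕ) (hk : 0 < k) (hd : 0 < d)
    (p : ℕ) (hp : Nat.Prime p) (hpd : ¬ p ∣ d)
    (hs0 : (g.coeff 0).natAbs = p ^ k * d)
    (Δ : ℕ) (hΔ0 : 0 < Δ) (hΔn : Δ ≤ n)
    (hΔ : ∀ h : Polynomial ℤ, h ∣ g → 0 < h.natDegree → Δ ≤ h.natDegree)
    (hzeros : ∀ z : ℂ, Polynomial.aeval z g = 0 →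
      (d : ℝ) ^ ((1 : ℝ) / (Δ : ℝ)) < ‖z‖) :
    (∃ (u : ℤˣ) (gs : Multiset (Polynomial ℤ)),
      (Multiset.card gs : ℕ∞) ≤
        (Finset.range (n + 1)).inf (fun i => (i : ℕ∞) + intVal p (g.coeff i)) ∧
      (∀ h ∈ gs, 0 < h.natDegree ∧ Irreducible h) ∧
      g = Polynomial.C (u : ℤ) * gs.prod) ∧
    ((k = 1 ∨ ¬ ((p : ℤ) ∣ g.coeff 1)) → Irreducible g) :=
  statement7_general g n hdeg hprim k d hd p hp hpd hs0 Δ hΔ0 hΔn hΔ hzeros
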